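/- arXiv:2309.14853 — 3 statements merged into one kernel-verified Lean document; each statement's English description precedes it below -/
import Mathlib

section
/- Let p = [p_1 > p_2 > ... > p_l] be a strictly decreasing sequence of positive integers all of the same parity, and let p↑ be defined by (p↑)_i = p_i + 1 for odd i and (p↑)_i = p_i − 1 for even i. Then ‖ρ⁺(p)‖² < ‖ρ⁺(p↑)‖², i.e. Σ_i (p_i³ − p_i) < Σ_i ((p↑)_i³ − (p↑)_i). -/
/-- The operation `p ↦ p↑` on finite sequences of integers: add `1` to the entries in
odd (1-based) positions and subtract `1` from the entries in even (1-based) positions. -/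
def upSeq (p : List ℤ) : List ℤ :=
  p.mapIdx (fun j x => if j % 2 = 0 then x + 1 else x - 1)

lemma upSeq_cons_cons (a b : ℤ) (t : List ℤ) :
    upSeq (a :: b :: t) = (a + 1) :: (b - 1) :: upSeq t := by
  simp only [upSeq, List.mapIdx_cons]
  norm_num
  congr 1
  funext i x
  have : (i + 1 + 1) % 2 = i % 2 := by omega
  simp [this]

lemma sum_le_upSeq : ∀ (p : List ℤ), (∀ x ∈ p, 0 < x) → List.Pairwise (· > ·) p →
    (p.map (fun x => x ^ 3 - x)).sum ≤ ((upSeq p).map (fun x => x ^ 3 - x)).sum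
  | [], _, _ => by simp [upSeq]
  | [a], hpos, _ => by
      have ha : 0 < a := hpos a (by simp)
      simp [upSeq]
      nlinarith
  | a :: b :: t, hpos, hdec => by
      have ha : 0 < a := hpos a (by simp)
      have hb : 0 < b := hpos b (by simp)
      have hab : b < a := (List.pairwise_cons.mp hdec).1 b (by simp)
      have ih := sum_le_upSeq t (fun x hx => hpos x (by simp [hx]))
        ((List.pairwise_cons.mp (List.pairwise_cons.mp hdec).2).2)
      rw [upSeq_cons_cons]
      simp only [List.map_cons, List.sum_cons]
      nlinarith

/-- If `p = [p_1 > ... > p_l]` is a (nonempty) strictly decreasing sequence of positive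
integers of the same parity, then `Σ_i (p_i³ − p_i) < Σ_i ((p↑)_i³ − (p↑)_i)`,
i.e. `‖ρ⁺(p)‖² < ‖ρ⁺(p↑)‖²`. -/
theorem sum_cubes_lt_upSeq (p : List ℤ) (hne : p ≠ []) (hpos : ∀ x ∈ p, 0 < x)
    (hdec : List.Pairwise (· > ·) p)
    (hpar : ∀ x ∈ p, ∀ y ∈ p, x % 2 = y % 2) :
    (p.map (fun x => x ^ 3 - x)).sum < ((upSeq p).map (fun x => x ^ 3 - x)).sum := by
  match p with
  | [] => exact absurd rfl hne
  | [a] =>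
      have ha : 0 < a := hpos a (by simp)
      simp [upSeq]
      nlinarith
  | a :: b :: t =>
      have ha : 0 < a := hpos a (by simp)
      have hb : 0 < b := hpos b (by simp)
      have hab : b < a := (List.pairwise_cons.mp hdec).1 b (by simp)
      have ih := sum_le_upSeq t (fun x hx => hpos x (by simp [hx]))
        ((List.pairwise_cons.mp (List.pairwise_cons.mp hdec).2).2)
      rw [upSeq_cons_cons]
      simp only [List.map_cons, List.sum_cons]
      nlinarith
end

section
/- Let λ be a partition of 2n. Then the set of partitions μ of 2n such that every odd part of μ occurs with even multiplicity and μ ≤ λ in dominance order is nonempty and contains a unique greatest element (the C-collapse λ_C of λ). -/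
/-- A partition of `n`: a weakly decreasing finite list of positive integers summing
to `n`. -/
def IsPartitionOf (l : List ℕ) (n : ℕ) : Prop :=
  List.Pairwise (· ≥ ·) l ∧ (∀ x ∈ l, 0 < x) ∧ l.sum = n

/-- A partition is of type `C` if every odd part occurs with even multiplicity. -/
def TypeC (l : List ℕ) : Prop := ∀ x : ℕ, Odd x → Even (l.count x)

/-- The dominance order: `λ ≥ μ` iff every partial sum of `λ` is at least the
corresponding partial sum of `μ`. -/
def Dominates (l m : List ℕ) : Prop := ∀ j : ℕ, (m.take j).sum ≤ (l.take j).sum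


def psum (l : List ℕ) (j : ℕ) : ℕ := (l.take j).sum

lemma psum_succ (l : List ℕ) (j : ℕ) : psum l (j+1) = psum l j + l.getD j 0 := by
  simp [psum, List.take_succ, List.getD_eq_getElem?_getD]
  cases l[j]? <;> simp

lemma psum_zero (l : List ℕ) : psum l 0 = 0 := rfl

lemma psum_mono_succ (l : List ℕ) (j : ℕ) : psum l j ≤ psum l (j+1) := by
  rw [psum_succ]; omega

lemma psum_le_sum (l : List ℕ) (j : ℕ) : psum l j ≤ l.sum := by
  conv_rhs => rw [← List.take_append_drop j l]
  rw [List.sum_append]; exact Nat.le_add_right _ _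

lemma psum_of_le (l : List ℕ) {j : ℕ} (h : l.length ≤ j) : psum l j = l.sum := by
  rw [psum, List.take_of_length_le h]

lemma getD_anti {l : List ℕ} (hs : List.Pairwise (· ≥ ·) l) {i j : ℕ} (hij : i ≤ j) :
    l.getD j 0 ≤ l.getD i 0 := by
  by_cases hj : j < l.length
  · have hi : i < l.length := lt_of_le_of_lt hij hj
    rw [List.getD_eq_getElem _ _ hj, List.getD_eq_getElem _ _ hi]
    rcases eq_or_lt_of_le hij with rfl | hlt
    · exact le_refl _
    · exact List.Pairwise.rel_get_of_lt hs (by simpa using hlt)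
  · rw [List.getD_eq_default _ _ (by omega)]
    exact Nat.zero_le _

lemma psum_concave {l : List ℕ} (hs : List.Pairwise (· ≥ ·) l) (j : ℕ) :
    psum l j + psum l (j+2) ≤ 2 * psum l (j+1) := by
  rw [psum_succ, psum_succ]
  have := getD_anti hs (show j ≤ j+1 by omega)
  omega

lemma corner_iff (l : List ℕ) (j : ℕ) :
    (psum l j + psum l (j+2) < 2 * psum l (j+1)) ↔ l.getD (j+1) 0 < l.getD j 0 := by
  rw [psum_succ, psum_succ]; omega

lemma length_le_sum {l : List ℕ} (h : ∀ x ∈ l, 0 < x) : l.length ≤ l.sum := by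
  induction l with
  | nil => simp
  | cons a t ih =>
    simp only [List.length_cons, List.sum_cons]
    have := h a (by simp)
    have := ih (fun x hx => h x (by simp [hx]))
    omega

lemma sorted_split {l : List ℕ} (hs : List.Pairwise (· ≥ ·) l) (x : ℕ) :
    l = l.filter (fun y => decide (x < y)) ++ l.filter (fun y => decide (y = x))
        ++ l.filter (fun y => decide (y < x)) := by
  induction l with
  | nil => simp
  | cons h t ih =>
    rw [List.pairwise_cons] at hs
    obtain ⟨hall, hts⟩ := hs
    have iht := ih hts
    rcases Nat.lt_trichotomy x h with hlt | rfl | hgt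
    · rw [List.filter_cons_of_pos (by simpa using hlt),
        List.filter_cons_of_neg (by simp; omega),
        List.filter_cons_of_neg (by simp; omega)]
      rw [List.cons_append, List.cons_append]
      exact congrArg (h :: ·) iht
    · have h1 : t.filter (fun y => decide (x < y)) = [] := by
        apply List.filter_eq_nil_iff.mpr
        intro y hy
        have := hall y hy
        simp; omega
      rw [List.filter_cons_of_neg (by simp),
        List.filter_cons_of_pos (by simp),
        List.filter_cons_of_neg (by simp)]
      rw [h1] at iht ⊢
      simp only [List.nil_append] at iht ⊢
      rw [List.cons_append]
      exact congrArg (x :: ·) iht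
    · have h1 : (h :: t).filter (fun y => decide (x < y)) = [] := by
        apply List.filter_eq_nil_iff.mpr
        intro y hy
        simp only [List.mem_cons] at hy
        have : y ≤ h := by rcases hy with rfl | hy; exacts [le_refl _, hall y hy]
        simp; omega
      have h2 : (h :: t).filter (fun y => decide (y = x)) = [] := by
        apply List.filter_eq_nil_iff.mpr
        intro y hy
        simp only [List.mem_cons] at hy
        have : y ≤ h := by rcases hy with rfl | hy; exacts [le_refl _, hall y hy]
        simp; omega
      have h3 : (h :: t).filter (fun y => decide (y < x)) = h :: t := by
        apply List.filter_eq_self.mpr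
        intro y hy
        simp only [List.mem_cons] at hy
        have : y ≤ h := by rcases hy with rfl | hy; exacts [le_refl _, hall y hy]
        simp; omega
      rw [h1, h2, h3, List.nil_append, List.nil_append]

lemma typeC_even_corner {l : List ℕ} (hs : List.Pairwise (· ≥ ·) l) (ht : TypeC l)
    (s : ℕ) (hc : l.getD (s+1) 0 < l.getD s 0) : Even (psum l (s+1)) := by
  have hcount : ∀ y ∈ l.take (s+1), (l.take (s+1)).count y = l.count y := by
    intro y hy
    obtain ⟨i, hi, hiy⟩ := List.mem_iff_getElem.mp hy
    rw [List.length_take] at hi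
    have hilen : i < l.length := by omega
    simp only [List.getElem_take] at hiy
    have hyge : l.getD s 0 ≤ y := by
      rw [← hiy, ← List.getD_eq_getElem l 0 hilen]
      exact getD_anti hs (by omega)
    have hnd : y ∉ l.drop (s+1) := by
      intro hmem
      obtain ⟨k, hk, hky⟩ := List.mem_iff_getElem.mp hmem
      rw [List.length_drop] at hk
      have hklen : s+1+k < l.length := by omega
      have : y ≤ l.getD (s+1) 0 := by
        rw [← hky, List.getElem_drop, ← List.getD_eq_getElem l 0 hklen]
        exact getD_anti hs (by omega)
      omega
    have h3 : l.count y = (l.take (s+1)).count y + (l.drop (s+1)).count y := by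
      conv_lhs => rw [← List.take_append_drop (s+1) l]
      rw [List.count_append]
    rw [List.count_eq_zero.mpr hnd] at h3
    omega
  show Even ((l.take (s+1)).sum)
  rw [← Multiset.sum_coe, Finset.sum_multiset_count, even_iff_two_dvd]
  apply Finset.dvd_sum
  intro y hy
  have hyP : y ∈ l.take (s+1) := by simpa using hy
  rw [Multiset.coe_count, smul_eq_mul]
  rcases Nat.even_or_odd y with hey | hoy
  · exact Dvd.dvd.mul_left (even_iff_two_dvd.mp hey) _
  · have : Even ((l.take (s+1)).count y) := by rw [hcount y hyP]; exact ht y hoy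
    exact Dvd.dvd.mul_right (even_iff_two_dvd.mp this) _

lemma corner_even_typeC {l : List ℕ} (hs : List.Pairwise (· ≥ ·) l)
    (hce : ∀ s, l.getD (s+1) 0 < l.getD s 0 → Even (psum l (s+1))) : TypeC l := by
  intro x hx
  by_cases hmem : x ∈ l
  swap
  · rw [List.count_eq_zero.mpr hmem]; exact Even.zero
  have hxpos : 0 < x := hx.pos
  obtain ⟨c', hc'⟩ : ∃ c', l.count x = c' + 1 :=
    ⟨l.count x - 1, by have := List.count_pos_iff.mpr hmem; omega⟩
  obtain ⟨A, hAprop, C, hCprop, hsplit⟩ : ∃ A, (∀ y ∈ A, x < y) ∧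
      ∃ C, (∀ y ∈ C, y < x) ∧ l = A ++ List.replicate (c'+1) x ++ C := by
    refine ⟨l.filter (fun y => decide (x < y)), ?_, l.filter (fun y => decide (y < x)), ?_, ?_⟩
    · intro y hy; simpa using (List.mem_filter.mp hy).2
    · intro y hy; simpa using (List.mem_filter.mp hy).2
    · have hR : l.filter (fun y => decide (y = x)) = List.replicate (c'+1) x := by
        rw [List.filter_eq (l := l) x, hc']
      rw [← hR]; exact sorted_split hs x
  have hlenAR : (A ++ List.replicate (c'+1) x).length = A.length + (c'+1) := by
    simp [List.length_append]
  have hps1 : psum l A.length = A.sum := by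
    conv_lhs => rw [psum, hsplit, List.append_assoc, List.take_left]
  have htk : List.take (c'+1) (List.replicate (c'+1) x ++ C) = List.replicate (c'+1) x :=
    List.take_left' List.length_replicate
  have hps2 : psum l (A.length + (c'+1)) = A.sum + (c'+1) * x := by
    conv_lhs => rw [psum, hsplit, List.append_assoc, List.take_append, List.take_of_length_le (by omega), Nat.add_sub_cancel_left, htk]
    rw [List.sum_append, List.sum_replicate, smul_eq_mul]
  have hgA : ∀ j < A.length, x < l.getD j 0 := by
    intro j hj
    conv_rhs => rw [hsplit]
    rw [List.getD_append _ _ _ _ (by rw [hlenAR]; omega),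
      List.getD_append _ _ _ _ hj,
      List.getD_eq_getElem _ 0 hj]
    exact hAprop _ (List.getElem_mem hj)
  have hgR : ∀ j, A.length ≤ j → j < A.length + (c'+1) → l.getD j 0 = x := by
    intro j hj1 hj2
    conv_lhs => rw [hsplit]
    rw [List.getD_append _ _ _ _ (by rw [hlenAR]; omega),
      List.getD_append_right _ _ _ _ hj1,
      List.getD_eq_getElem _ 0 (by rw [List.length_replicate]; omega),
      List.getElem_replicate]
  have hgC : l.getD (A.length + (c'+1)) 0 < x := by
    conv_lhs => rw [hsplit]
    rw [List.getD_append_right _ _ _ _ (by rw [hlenAR]), hlenAR, Nat.sub_self]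
    by_cases hCl : 0 < C.length
    · rw [List.getD_eq_getElem _ 0 hCl]
      exact hCprop _ (List.getElem_mem hCl)
    · rw [List.getD_eq_default _ _ (by omega)]; omega
  have he1 : Even (psum l A.length) := by
    rcases Nat.eq_zero_or_pos A.length with hi0 | hipos
    · rw [hi0]; exact Even.zero (α := ℕ)
    · obtain ⟨i', hii⟩ : ∃ i', A.length = i' + 1 := ⟨A.length - 1, by omega⟩
      have hco : l.getD (i'+1) 0 < l.getD i' 0 := by
        have h1 := hgR (i'+1) (by omega) (by omega)
        have h2 := hgA i' (by omega)
        omega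
      have := hce i' hco
      rwa [hii]
  have he2 : Even (psum l (A.length + (c'+1))) := by
    have heq : A.length + (c'+1) = (A.length + c') + 1 := by omega
    have hco : l.getD ((A.length + c')+1) 0 < l.getD (A.length + c') 0 := by
      have h1 := hgR (A.length + c') (by omega) (by omega)
      have h2 := hgC
      rw [heq] at h2
      omega
    have := hce _ hco
    rwa [heq]
  rw [hps1] at he1
  rw [hps2] at he2
  have hcx : Even ((c'+1) * x) := (Nat.even_add.mp he2).mp he1
  rw [hc']
  rcases Nat.even_mul.mp hcx with h | h
  · exact h
  · exact absurd h (by rwa [← Nat.not_even_iff_odd] at hx)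

/-- Build a partition list from a partial-sum function. -/
lemma exists_list_of_fun (N : ℕ) (f : ℕ → ℕ) (hf0 : f 0 = 0)
    (hmono : ∀ j, f j ≤ f (j+1)) (hconc : ∀ j, f j + f (j+2) ≤ 2 * f (j+1))
    (hbd : ∀ j, f j ≤ N) (htop : f N = N) :
    ∃ m : List ℕ, List.Pairwise (· ≥ ·) m ∧ (∀ x ∈ m, 0 < x) ∧ (m.sum = N ∧
      ∀ j, psum m j = f j) := by
  classical
  have hmono' : Monotone f := monotone_nat_of_le_succ hmono
  have hex : ∃ j, f j = N := ⟨N, htop⟩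
  set K := Nat.find hex with hK
  have hfK : f K = N := Nat.find_spec hex
  have hKN : K ≤ N := Nat.find_le htop
  have hlt : ∀ i < K, f i < N := by
    intro i hi
    have := Nat.find_min hex hi
    have := hbd i
    omega
  have hdanti : ∀ i j, i ≤ j → f (j+1) - f j ≤ f (i+1) - f i := by
    intro i j hij
    induction j with
    | zero => have : i = 0 := by omega
              rw [this]
    | succ j ih =>
      rcases Nat.lt_or_ge i (j+1) with h | h
      · have h1 := ih (by omega)
        have h2 := hconc j
        have h3 := hmono j
        have h4 := hmono (j+1)
        have h5 := hmono i
        rw [show j + 1 + 1 = j + 2 from rfl]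
        omega
      · have : i = j + 1 := by omega
        rw [this]
  have hdpos : ∀ i < K, 1 ≤ f (i+1) - f i := by
    intro i hi
    by_contra h
    have hstuck : ∀ j, i ≤ j → f (j+1) = f j := by
      intro j hj
      have := hdanti i j hj
      have := hmono j
      omega
    have hconst : ∀ j, i ≤ j → f j = f i := by
      intro j hj
      induction j with
      | zero => have : i = 0 := by omega
                rw [this]
      | succ j ih =>
        rcases Nat.lt_or_ge i (j+1) with h' | h'
        · rw [hstuck j (by omega), ih (by omega)]
        · have : i = j + 1 := by omega
          rw [this]
    have := hconst N (by omega)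
    have := hlt i hi
    omega
  refine ⟨(List.range K).map (fun i => f (i+1) - f i), ?_, ?_, ?_⟩
  · rw [List.pairwise_map]
    exact List.Pairwise.imp_of_mem (fun {a b} _ _ hab => hdanti a b (le_of_lt hab))
      (List.pairwise_lt_range (n := K))
  · intro x hx
    obtain ⟨i, hi, rfl⟩ := List.mem_map.mp hx
    rw [List.mem_range] at hi
    exact hdpos i hi
  · have hlen : ((List.range K).map (fun i => f (i+1) - f i)).length = K := by simp
    have hpsle : ∀ j, j ≤ K → psum ((List.range K).map (fun i => f (i+1) - f i)) j = f j := by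
      intro j hj
      induction j with
      | zero => rw [psum_zero, hf0]
      | succ j ih =>
        rw [psum_succ, ih (by omega)]
        have hjK : j < K := by omega
        rw [List.getD_eq_getElem _ 0 (by rw [hlen]; omega)]
        rw [List.getElem_map, List.getElem_range]
        have := hmono j
        omega
    have h1 : psum ((List.range K).map (fun i => f (i+1) - f i)) K
        = ((List.range K).map (fun i => f (i+1) - f i)).sum := by
      rw [psum, List.take_of_length_le (by rw [hlen])]
    have h2 := hpsle K (le_refl K)
    constructor
    · rw [← h1, h2, hfK]
    · intro j
      rcases le_or_gt j K with hj | hj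
      · exact hpsle j hj
      · rw [psum, List.take_of_length_le (by rw [hlen]; omega), ← h1, h2, hfK]
        have := hmono' (show K ≤ j by omega)
        have := hbd j
        omega

lemma eq_of_psum_eq : ∀ (m m' : List ℕ), (∀ x ∈ m, 0 < x) → (∀ x ∈ m', 0 < x) →
    (∀ j, psum m j = psum m' j) → m = m' := by
  intro m
  induction m with
  | nil =>
    intro m' _ hp' hps
    cases m' with
    | nil => rfl
    | cons h t =>
      have := hps 1
      have hh := hp' h (by simp)
      simp [psum] at this
      omega
  | cons a t ih =>
    intro m' hp hp' hps
    cases m' with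
    | nil =>
      have := hps 1
      have ha := hp a (by simp)
      simp [psum] at this
      omega
    | cons b t' =>
      have h1 := hps 1
      simp [psum] at h1
      subst h1
      have ht : t = t' := by
        apply ih t' (fun x hx => hp x (by simp [hx])) (fun x hx => hp' x (by simp [hx]))
        intro j
        have := hps (j+1)
        simp [psum, List.take_cons, List.sum_cons] at this
        simpa [psum] using this
      rw [ht]

def MajF (S : List ℕ → Prop) (G : ℕ → ℕ) : Prop :=
  (∀ j, G j ≤ G (j+1)) ∧ (∀ j, G j + G (j+2) ≤ 2 * G (j+1)) ∧
  ∀ k, S k → ∀ j, psum k j ≤ G j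

noncomputable def HF (S : List ℕ → Prop) : ℕ → ℕ :=
  fun j => sInf {v | ∃ G, MajF S G ∧ G j = v}

section HFbasic

variable {S : List ℕ → Prop} {Λ : ℕ → ℕ}

lemma HF_ne (hone : MajF S Λ) (j : ℕ) : {v | ∃ G, MajF S G ∧ G j = v}.Nonempty :=
  ⟨Λ j, Λ, hone, rfl⟩

lemma HF_le (hG : MajF S G) (j : ℕ) : HF S j ≤ G j :=
  Nat.sInf_le ⟨G, hG, rfl⟩

lemma HF_attain (hone : MajF S Λ) (j : ℕ) : ∃ G, MajF S G ∧ G j = HF S j :=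
  Nat.sInf_mem (HF_ne hone j)

lemma le_HF (hone : MajF S Λ) {k : List ℕ} (hk : S k) (j : ℕ) : psum k j ≤ HF S j := by
  apply le_csInf (HF_ne hone j)
  rintro v ⟨G, hG, rfl⟩
  exact hG.2.2 k hk j

lemma HF_maj (hone : MajF S Λ) : MajF S (HF S) := by
  refine ⟨?_, ?_, ?_⟩
  · intro j
    obtain ⟨G, hG, hGj⟩ := HF_attain hone (j+1)
    calc HF S j ≤ G j := HF_le hG j
    _ ≤ G (j+1) := hG.1 j
    _ = HF S (j+1) := hGj
  · intro j
    obtain ⟨G, hG, hGj⟩ := HF_attain hone (j+1)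
    calc HF S j + HF S (j+2) ≤ G j + G (j+2) := Nat.add_le_add (HF_le hG j) (HF_le hG (j+2))
    _ ≤ 2 * G (j+1) := hG.2.1 j
    _ = 2 * HF S (j+1) := by rw [hGj]
  · intro k hk j
    exact le_HF hone hk j

end HFbasic

lemma psum_replicate_one (N j : ℕ) : psum (List.replicate N 1) j = min j N := by
  rw [psum, List.take_replicate, List.sum_replicate, smul_eq_mul, mul_one]

section Core

variable {N : ℕ} {S : List ℕ → Prop} {Λ : ℕ → ℕ}

lemma dec_single (hone : MajF S Λ) (hstair : S (List.replicate N 1)) (t : ℕ)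
    (hfull : HF S t + HF S (t+2) + 2 ≤ 2 * HF S (t+1))
    (hstrict : ∀ k, S k → psum k (t+1) < HF S (t+1)) : False := by
  classical
  obtain ⟨H, hH⟩ : ∃ H, H = HF S := ⟨_, rfl⟩
  rw [← hH] at hfull hstrict
  have hm : ∀ j, H j ≤ H (j+1) := by rw [hH]; exact (HF_maj hone).1
  have hc : ∀ j, H j + H (j+2) ≤ 2 * H (j+1) := by rw [hH]; exact (HF_maj hone).2.1
  have hmj : ∀ k, S k → ∀ j, psum k j ≤ H j := by rw [hH]; exact (HF_maj hone).2.2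
  have hpos : 1 ≤ H (t+1) := lt_of_le_of_lt (Nat.zero_le _) (hstrict _ hstair)
  set G := Function.update H (t+1) (H (t+1) - 1) with hG
  have hGs : G (t+1) = H (t+1) - 1 := Function.update_self _ _ _
  have hGo : ∀ j, j ≠ t+1 → G j = H j := fun j hj => Function.update_of_ne hj _ _
  have hGmaj : MajF S G := by
    refine ⟨?_, ?_, ?_⟩
    · intro j
      have hm' : H (t+1) ≤ H (t+2) := by
        have := hm (t+1); rwa [show t+1+1 = t+2 from rfl] at this
      by_cases hja : j = t
      · rw [hja, hGo t (by omega), hGs]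
        omega
      · by_cases hjb : j = t+1
        · rw [hjb, hGs, hGo (t+1+1) (by omega)]
          have := hm (t+1)
          omega
        · rw [hGo j hjb, hGo (j+1) (by omega)]
          exact hm j
    · intro j
      by_cases hja : j = t
      · rw [hja, hGo t (by omega), hGo (t+2) (by omega), hGs]
        omega
      · by_cases hjb : j = t+1
        · rw [hjb, hGs, hGo (t+1+1) (by omega), hGo (t+1+2) (by omega)]
          have := hc (t+1)
          omega
        · by_cases hj2 : j + 2 = t + 1
          · rw [hGo j hjb, hGo (j+1) (by omega), hj2, hGs]
            have := hc j
            rw [hj2] at this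
            omega
          · rw [hGo j hjb, hGo (j+1) (by omega), hGo (j+2) hj2]
            exact hc j
    · intro k hk j
      by_cases hj : j = t+1
      · subst hj
        rw [hGs]
        have := hstrict k hk
        omega
      · rw [hGo j hj]
        exact hmj k hk j
  have hfin := HF_le hGmaj (t+1)
  rw [← hH, hGs] at hfin
  omega

lemma dec_pair (hone : MajF S Λ) (hstair : S (List.replicate N 1)) (r u : ℕ)
    (hru : r < u)
    (hhr : HF S r + HF S (r+2) + 1 ≤ 2 * HF S (r+1))
    (hhu : HF S u + HF S (u+2) + 1 ≤ 2 * HF S (u+1))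
    (hstrict : ∀ v, r+1 ≤ v → v ≤ u+1 → ∀ k, S k → psum k v < HF S v) : False := by
  classical
  obtain ⟨H, hH⟩ : ∃ H, H = HF S := ⟨_, rfl⟩
  rw [← hH] at hhr hhu hstrict
  have hm : ∀ j, H j ≤ H (j+1) := by rw [hH]; exact (HF_maj hone).1
  have hc : ∀ j, H j + H (j+2) ≤ 2 * H (j+1) := by rw [hH]; exact (HF_maj hone).2.1
  have hmj : ∀ k, S k → ∀ j, psum k j ≤ H j := by rw [hH]; exact (HF_maj hone).2.2
  have hpos : ∀ v, r+1 ≤ v → v ≤ u+1 → 1 ≤ H v := fun v h1 h2 =>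
    lt_of_le_of_lt (Nat.zero_le _) (hstrict v h1 h2 _ hstair)
  have hkey1 : H r + 1 ≤ H (r+1) := by
    have := hm (r+1)
    rw [show r+1+1 = r+2 from rfl] at this
    omega
  set G := fun j => if r+1 ≤ j ∧ j ≤ u+1 then H j - 1 else H j with hGdef
  have hGin : ∀ j, r+1 ≤ j → j ≤ u+1 → G j = H j - 1 := by
    intro j h1 h2; simp only [hGdef]; rw [if_pos ⟨h1, h2⟩]
  have hGout : ∀ j, ¬(r+1 ≤ j ∧ j ≤ u+1) → G j = H j := by
    intro j h; simp only [hGdef]; rw [if_neg h]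
  have hGmaj : MajF S G := by
    refine ⟨?_, ?_, ?_⟩
    · intro j
      by_cases h1 : r+1 ≤ j ∧ j ≤ u+1
      · rw [hGin j h1.1 h1.2]
        by_cases h2 : j+1 ≤ u+1
        · rw [hGin (j+1) (by omega) h2]
          have := hm j
          have := hpos j h1.1 h1.2
          omega
        · rw [hGout (j+1) (by omega)]
          have := hm j
          omega
      · by_cases h2 : r+1 ≤ j+1 ∧ j+1 ≤ u+1
        · have hjr : j = r := by omega
          subst hjr
          rw [hGout j (by omega), hGin (j+1) h2.1 h2.2]
          omega
        · rw [hGout j h1, hGout (j+1) h2]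
          exact hm j
    · intro j
      by_cases h1 : r+1 ≤ j ∧ j ≤ u+1 <;>
        by_cases h2 : r+1 ≤ j+1 ∧ j+1 ≤ u+1 <;>
          by_cases h3 : r+1 ≤ j+2 ∧ j+2 ≤ u+1
      · -- in in in
        rw [hGin j h1.1 h1.2, hGin (j+1) h2.1 h2.2, hGin (j+2) h3.1 h3.2]
        have := hc j
        have := hpos j h1.1 h1.2
        have := hpos (j+1) h2.1 h2.2
        have := hpos (j+2) h3.1 h3.2
        omega
      · -- in in out : j = u
        have hju : j = u := by omega
        rw [← hju] at hhu
        rw [hGin j h1.1 h1.2, hGin (j+1) h2.1 h2.2, hGout (j+2) h3]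
        have := hpos (j+1) h2.1 h2.2
        have := hpos j h1.1 h1.2
        omega
      · -- in out in : impossible
        omega
      · -- in out out : j = u+1
        rw [hGin j h1.1 h1.2, hGout (j+1) h2, hGout (j+2) h3]
        have := hc j
        omega
      · -- out in in : j = r
        have hjr : j = r := by omega
        rw [← hjr] at hhr
        rw [hGout j h1, hGin (j+1) h2.1 h2.2, hGin (j+2) h3.1 h3.2]
        have := hpos (j+2) h3.1 h3.2
        omega
      · -- out in out : impossible since r < u
        omega
      · -- out out in : j+2 = r+1
        rw [hGout j h1, hGout (j+1) h2, hGin (j+2) h3.1 h3.2]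
        have := hc j
        omega
      · rw [hGout j h1, hGout (j+1) h2, hGout (j+2) h3]
        exact hc j
    · intro k hk j
      by_cases h1 : r+1 ≤ j ∧ j ≤ u+1
      · rw [hGin j h1.1 h1.2]
        have := hstrict j h1.1 h1.2 k hk
        omega
      · rw [hGout j h1]
        exact hmj k hk j
  have hfin := HF_le hGmaj (r+1)
  rw [← hH, hGin (r+1) (le_refl _) (by omega)] at hfin
  have := hpos (r+1) (le_refl _) (by omega)
  omega

end Core

section CornerEven

variable {N : ℕ} {S : List ℕ → Prop} {Λ : ℕ → ℕ}

lemma cornerEven_HF (hone : MajF S Λ) (hΛ0 : Λ 0 = 0) (hΛbd : ∀ j, Λ j ≤ N)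
    (hstair : S (List.replicate N 1))
    (hmemCE : ∀ k, S k → ∀ v, psum k v + psum k (v+2) < 2 * psum k (v+1) →
      Even (psum k (v+1)))
    (t : ℕ) (hcor : HF S t + HF S (t+2) < 2 * HF S (t+1)) : Even (HF S (t+1)) := by
  classical
  have hm : ∀ j, HF S j ≤ HF S (j+1) := (HF_maj hone).1
  have hc : ∀ j, HF S j + HF S (j+2) ≤ 2 * HF S (j+1) := (HF_maj hone).2.1
  have hmono : Monotone (HF S) := monotone_nat_of_le_succ hm
  have hH0 : HF S 0 = 0 := by
    have h1 := HF_le hone 0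
    rw [hΛ0] at h1
    omega
  have hHbd : ∀ j, HF S j ≤ N := fun j => le_trans (HF_le hone j) (hΛbd j)
  have hstairle : ∀ j, min j N ≤ HF S j := by
    intro j
    have := le_HF hone hstair j
    rwa [psum_replicate_one] at this
  have hHtop : ∀ u, N ≤ u → HF S u = N := by
    intro u hu
    have h1 := hHbd u
    have h2 := hstairle u
    omega
  by_cases htouch : ∃ k, S k ∧ psum k (t+1) = HF S (t+1)
  · -- Case A : some member touches at the corner
    obtain ⟨k, hk, hke⟩ := htouch
    by_contra hodd
    have hnc : ¬ (psum k t + psum k (t+2) < 2 * psum k (t+1)) := by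
      intro hcc
      exact hodd (hke ▸ hmemCE k hk t hcc)
    have h1 := le_HF hone hk t
    have h2 := le_HF hone hk (t+2)
    omega
  · -- Case B : strictly above every member at t+1
    push_neg at htouch
    have hstrict_s : ∀ k, S k → psum k (t+1) < HF S (t+1) := fun k hk =>
      lt_of_le_of_ne (le_HF hone hk (t+1)) (htouch k hk)
    have hnotfull : ¬ (HF S t + HF S (t+2) + 2 ≤ 2 * HF S (t+1)) := fun h =>
      dec_single hone hstair t h hstrict_s
    have hhalf : HF S t + HF S (t+2) + 1 = 2 * HF S (t+1) := by omega
    by_contra hodd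
    -- touching predicate
    set Tch : ℕ → Prop := fun v => ∃ k, S k ∧ psum k v = HF S v with hTch
    have hT0 : Tch 0 := ⟨List.replicate N 1, hstair, by rw [psum_replicate_one, hH0]; omega⟩
    have hexq : ∃ u, t+1 < u ∧ Tch u := by
      refine ⟨N + t + 2, by omega, List.replicate N 1, hstair, ?_⟩
      rw [psum_replicate_one, hHtop (N+t+2) (by omega)]
      omega
    set p := Nat.findGreatest Tch t with hp
    set q := Nat.find hexq with hq
    have hple : p ≤ t := Nat.findGreatest_le t
    have hTp : Tch p := Nat.findGreatest_spec (Nat.zero_le t) hT0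
    have hqgt : t + 1 < q := (Nat.find_spec hexq).1
    have hTq : Tch q := (Nat.find_spec hexq).2
    have hnotouch : ∀ v, p < v → v < q → ∀ k, S k → psum k v < HF S v := by
      intro v h1 h2 k hk
      refine lt_of_le_of_ne (le_HF hone hk v) (fun he => ?_)
      have hTv : Tch v := ⟨k, hk, he⟩
      rcases Nat.lt_trichotomy v (t+1) with hv | hv | hv
      · exact Nat.findGreatest_is_greatest h1 (by omega) hTv
      · exact htouch k hk (hv ▸ he)
      · exact Nat.find_min hexq h2 ⟨hv, hTv⟩
    -- no corner in (p,q) except at t+1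
    have hnc : ∀ v, p ≤ v → v + 1 < q → v + 1 ≠ t + 1 →
        HF S v + HF S (v+2) = 2 * HF S (v+1) := by
      intro v hv1 hv2 hv3
      have hle := hc v
      by_contra hcc
      have hcorv : HF S v + HF S (v+2) + 1 ≤ 2 * HF S (v+1) := by omega
      rcases Nat.lt_or_ge (v+1) (t+1) with hvt | hvt
      · exact dec_pair hone hstair v t (by omega) hcorv (by omega)
          (fun w hw1 hw2 k hk => hnotouch w (by omega) (by omega) k hk)
      · exact dec_pair hone hstair t v (by omega) (by omega) hcorv
          (fun w hw1 hw2 k hk => hnotouch w (by omega) (by omega) k hk)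
    -- slopes
    obtain ⟨a, ha⟩ : ∃ a, HF S t + a = HF S (t+1) := ⟨HF S (t+1) - HF S t, by have := hm t; omega⟩
    obtain ⟨b, hb⟩ : ∃ b, HF S (t+1) + b = HF S (t+2) := ⟨HF S (t+2) - HF S (t+1), by
      have := hm (t+1); rw [show t+1+1 = t+2 from rfl] at this; omega⟩
    have hab : a = b + 1 := by omega
    -- constant slope a on (p, t+1]
    have hslopeA : ∀ d, d ≤ t - p → HF S (t - d) + a = HF S (t - d + 1) := by
      intro d
      induction d with
      | zero => intro _; rw [Nat.sub_zero]; exact ha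
      | succ d ih =>
        intro hd
        have ihd := ih (by omega)
        have hncd := hnc (t - (d+1)) (by omega) (by omega) (by omega)
        have e1 : t - (d+1) + 1 = t - d := by omega
        have e2 : t - (d+1) + 2 = t - d + 1 := by omega
        rw [e1, e2] at hncd
        rw [e1]
        omega
    have haccA : ∀ d, d ≤ t - p → HF S (t - d) + a * d + a = HF S (t + 1) := by
      intro d
      induction d with
      | zero => intro _; rw [Nat.sub_zero, Nat.mul_zero, Nat.add_zero]; exact ha
      | succ d ih =>
        intro hd
        have ihd := ih (by omega)
        have hsd := hslopeA (d+1) hd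
        have e1 : t - (d+1) + 1 = t - d := by omega
        rw [e1] at hsd
        rw [Nat.mul_succ]
        omega
    have hHp : HF S p + a * (t - p) + a = HF S (t+1) := by
      have := haccA (t - p) (le_refl _)
      rwa [show t - (t - p) = p by omega] at this
    -- constant slope b on [t+1, q]
    have hslopeB : ∀ d, t + 1 + d < q → HF S (t+1+d) + b = HF S (t+1+d+1) := by
      intro d
      induction d with
      | zero => intro _; rw [Nat.add_zero, show t+1+1 = t+2 from rfl]; exact hb
      | succ d ih =>
        intro hd
        have ihd := ih (by omega)
        have hncd := hnc (t+1+d) (by omega) (by omega) (by omega)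
        have e2 : t+1+d+2 = t+1+(d+1)+1 := by omega
        have e1 : t+1+d+1 = t+1+(d+1) := by omega
        rw [e2, e1] at hncd
        rw [e1] at ihd
        omega
    have haccB : ∀ d, t + 1 + d ≤ q → HF S (t+1+d) = HF S (t+1) + b * d := by
      intro d
      induction d with
      | zero => intro _; rw [Nat.add_zero]; omega
      | succ d ih =>
        intro hd
        have ihd := ih (by omega)
        have hsd := hslopeB d (by omega)
        have e1 : t+1+d+1 = t+1+(d+1) := by omega
        rw [e1] at hsd
        rw [Nat.mul_succ]
        omega
    have hHq : HF S q = HF S (t+1) + b * (q - t - 1) := by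
      have := haccB (q - t - 1) (by omega)
      rwa [show t+1+(q-t-1) = q by omega] at this
    -- H(p) is even
    have hevenp : Even (HF S p) := by
      rcases Nat.eq_zero_or_pos p with hp0 | hppos
      · rw [hp0, hH0]; exact Even.zero
      · obtain ⟨p', hp'⟩ : ∃ p', p = p' + 1 := ⟨p - 1, by omega⟩
        obtain ⟨k, hk, hke⟩ := hTp
        -- H (p+1) = H p + a
        have hpa : HF S p + a = HF S (p + 1) := by
          have := hslopeA (t - p) (le_refl _)
          rwa [show t - (t - p) = p by omega] at this
        -- member is strictly below at p+1
        have h1 : psum k (p+1) < HF S (p+1) := hnotouch (p+1) (by omega) (by omega) k hk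
        -- concavity at p
        have h2 := hc p'
        rw [← hp'] at h2
        have h2' : HF S p' + HF S (p+1) ≤ 2 * HF S p := by
          have := hc p'
          rw [show p' + 1 = p by omega, show p' + 2 = p + 1 by omega] at this
          exact this
        have h3 : psum k p' ≤ HF S p' := le_HF hone hk p'
        -- corner of the member at p
        have hcork : psum k p' + psum k (p'+2) < 2 * psum k (p'+1) := by
          rw [show p' + 1 = p by omega, show p' + 2 = p + 1 by omega]
          rw [hke]
          omega
        have := hmemCE k hk p' hcork
        rw [show p' + 1 = p by omega, hke] at this
        exact this
    -- H(q) is even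
    have hevenq : Even (HF S q) := by
      obtain ⟨q', hq'⟩ : ∃ q', q = q' + 1 := ⟨q - 1, by omega⟩
      obtain ⟨k, hk, hke⟩ := hTq
      have h1 : psum k q' < HF S q' := hnotouch q' (by omega) (by omega) k hk
      have hqb : HF S q' + b = HF S q := by
        have := hslopeB (q' - t - 1) (by omega)
        rw [show t+1+(q'-t-1) = q' by omega, show q' + 1 = q by omega] at this
        exact this
      have h2 : HF S (q+1) ≤ HF S q + b := by
        have := hc q'
        rw [show q' + 1 = q by omega, show q' + 2 = q + 1 by omega] at this
        omega
      have h3 : psum k (q+1) ≤ HF S (q+1) := le_HF hone hk (q+1)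
      have hcork : psum k q' + psum k (q'+2) < 2 * psum k (q'+1) := by
        rw [show q' + 1 = q by omega, show q' + 2 = q + 1 by omega, hke]
        omega
      have := hmemCE k hk q' hcork
      rw [show q' + 1 = q by omega, hke] at this
      exact this
    -- parity contradiction
    have hps : HF S p % 2 = 0 := Nat.even_iff.mp hevenp
    have hqs : HF S q % 2 = 0 := Nat.even_iff.mp hevenq
    have hts : HF S (t+1) % 2 = 1 := Nat.odd_iff.mp (Nat.not_even_iff_odd.mp hodd)
    have hXa : (a * (t-p) + a) % 2 = 1 := by omega
    have hXb : (b * (q - t - 1)) % 2 = 1 := by omega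
    have haodd : Odd a := by
      have : Odd (a * (t - p + 1)) := by
        rw [Nat.mul_succ]
        exact Nat.odd_iff.mpr hXa
      exact (Nat.odd_mul.mp this).1
    have hbodd : Odd b := (Nat.odd_mul.mp (Nat.odd_iff.mpr hXb)).1
    have := Nat.odd_iff.mp haodd
    have := Nat.odd_iff.mp hbodd
    omega


end CornerEven

/-- For every partition `λ` of `2n`, the set of type `C` partitions of `2n` dominated
by `λ` is nonempty and contains a unique greatest element (the C-collapse `λ_C`). -/
theorem exists_unique_C_collapse (n : ℕ) (l : List ℕ) (hl : IsPartitionOf l (2 * n)) :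
    ∃! m : List ℕ,
      (IsPartitionOf m (2 * n) ∧ TypeC m ∧ Dominates l m) ∧
      ∀ k : List ℕ, IsPartitionOf k (2 * n) → TypeC k → Dominates l k → Dominates m k := by
  classical
  obtain ⟨hsort, hpos, hsum⟩ := hl
  set N := 2 * n with hN
  set S : List ℕ → Prop := fun k => IsPartitionOf k N ∧ TypeC k ∧ Dominates l k with hS
  -- the partial sums of l form a majorant
  have hone : MajF S (psum l) := by
    refine ⟨psum_mono_succ l, psum_concave hsort, ?_⟩
    intro k hk j
    exact hk.2.2 j
  have hΛ0 : psum l 0 = 0 := psum_zero l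
  have hΛbd : ∀ j, psum l j ≤ N := by
    intro j
    have := psum_le_sum l j
    omega
  have hlenl : l.length ≤ N := by
    have := length_le_sum hpos
    omega
  have hΛstair : ∀ j, min j N ≤ psum l j := by
    intro j
    rcases Nat.le_or_ge j l.length with hj | hj
    · have h1 : ∀ x ∈ l.take j, 0 < x := fun x hx => hpos x (List.take_subset j l hx)
      have h2 := length_le_sum h1
      rw [List.length_take] at h2
      have : min j l.length = j := by omega
      rw [this] at h2
      have : psum l j = (l.take j).sum := rfl
      omega
    · rw [psum_of_le l hj, hsum]
      omega
  have hstair : S (List.replicate N 1) := by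
    refine ⟨⟨?_, ?_, ?_⟩, ?_, ?_⟩
    · exact List.pairwise_replicate.mpr (Or.inr (le_refl 1))
    · intro x hx
      rw [List.eq_of_mem_replicate hx]
      omega
    · rw [List.sum_replicate, smul_eq_mul, mul_one]
    · intro x hx
      rw [List.count_replicate]
      by_cases h1 : (1 : ℕ) = x
      · rw [if_pos (by simpa using h1)]
        exact ⟨n, by omega⟩
      · rw [if_neg (by simpa using h1)]
        exact Even.zero
    · intro j
      have h1 : ((List.replicate N 1).take j).sum = min j N := psum_replicate_one N j
      have := hΛstair j
      exact le_trans (le_of_eq h1) this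
  have hmemCE : ∀ k, S k → ∀ v, psum k v + psum k (v+2) < 2 * psum k (v+1) →
      Even (psum k (v+1)) := by
    intro k hk v hcv
    exact typeC_even_corner hk.1.1 hk.2.1 v ((corner_iff k v).mp hcv)
  have hm : ∀ j, HF S j ≤ HF S (j+1) := (HF_maj hone).1
  have hc : ∀ j, HF S j + HF S (j+2) ≤ 2 * HF S (j+1) := (HF_maj hone).2.1
  have hH0 : HF S 0 = 0 := by
    have h1 := HF_le hone 0
    rw [hΛ0] at h1
    omega
  have hHbd : ∀ j, HF S j ≤ N := fun j => le_trans (HF_le hone j) (hΛbd j)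
  have hHtop : HF S N = N := by
    have h2 := le_HF hone hstair N
    rw [psum_replicate_one] at h2
    have := hHbd N
    omega
  have hce := cornerEven_HF hone hΛ0 hΛbd hstair hmemCE
  obtain ⟨m, hmsort, hmpos, hmsum, hmps⟩ :=
    exists_list_of_fun N (HF S) hH0 hm hc hHbd hHtop
  have hmtc : TypeC m := by
    apply corner_even_typeC hmsort
    intro s hgd
    have hcps : psum m s + psum m (s+2) < 2 * psum m (s+1) := (corner_iff m s).mpr hgd
    rw [hmps, hmps, hmps] at hcps
    have := hce s hcps
    rwa [← hmps] at this
  have hmdom : Dominates l m := by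
    intro j
    have h1 : (m.take j).sum = psum m j := rfl
    rw [h1, hmps]
    exact HF_le hone j
  have hmgreat : ∀ k, IsPartitionOf k N → TypeC k → Dominates l k → Dominates m k := by
    intro k h1 h2 h3 j
    have h4 : psum k j ≤ HF S j := le_HF hone ⟨h1, h2, h3⟩ j
    rw [← hmps j] at h4
    exact h4
  refine ⟨m, ⟨⟨⟨hmsort, hmpos, hmsum⟩, hmtc, hmdom⟩, hmgreat⟩, ?_⟩
  rintro m' ⟨⟨hm'p, hm'tc, hm'dom⟩, hm'great⟩
  apply eq_of_psum_eq m' m hm'p.2.1 hmpos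
  intro j
  have h1 := hmgreat m' hm'p hm'tc hm'dom j
  have h2 := hm'great m ⟨hmsort, hmpos, hmsum⟩ hmtc hmdom j
  exact le_antisymm h1 h2
end

section
/- The symmetric group S_4 has linearly distinguishable subgroups: if H_1 and H_2 are subgroups of S_4 such that the permutation characters Ind_{H_1}^{S_4} 1 and Ind_{H_2}^{S_4} 1 are isomorphic as complex representations, then H_1 and H_2 are conjugate in S_4. -/
set_option maxRecDepth 100000

namespace S4LD

/-! ### Generic counting lemmas -/

section Counting

variable {G : Type*} [Group G] [Finite G]

/-- The set of `x` conjugating `g` into `H` counts fixed cosets times `|H|`. -/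
lemma card_conj_into (H : Subgroup G) (g : G) :
    Nat.card {x : G // x⁻¹ * g * x ∈ H} =
      Nat.card {q : G ⧸ H // g • q = q} * Nat.card H := by
  rw [← Nat.card_prod]
  apply Nat.card_congr
  have hmkout : ∀ q : G ⧸ H, QuotientGroup.mk q.out = q := fun q => Quotient.out_eq' q
  refine
    { toFun := fun x =>
        (⟨QuotientGroup.mk x.1, ?_⟩, ⟨((QuotientGroup.mk x.1 : G ⧸ H).out)⁻¹ * x.1, ?_⟩)
      invFun := fun p => ⟨p.1.1.out * p.2.1, ?_⟩
      left_inv := ?_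
      right_inv := ?_ }
  · obtain ⟨x, hx⟩ := x
    rw [MulAction.Quotient.smul_mk, smul_eq_mul, QuotientGroup.eq]
    have : (g * x)⁻¹ * x = (x⁻¹ * g * x)⁻¹ := by group
    rw [this]
    exact inv_mem hx
  · rw [← QuotientGroup.eq]
    exact hmkout _
  · obtain ⟨⟨q, hq⟩, ⟨h, hh⟩⟩ := p
    simp only
    have hmk : QuotientGroup.mk (q.out * h) = q := by
      rw [← hmkout q, QuotientGroup.eq]
      simpa [mul_assoc] using hh
    have : g • (QuotientGroup.mk (q.out * h) : G ⧸ H) = QuotientGroup.mk (q.out * h) := by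
      rw [hmk]; exact hq
    rw [MulAction.Quotient.smul_mk, smul_eq_mul, QuotientGroup.eq] at this
    have h2 : (q.out * h)⁻¹ * g * (q.out * h) = ((g * (q.out * h))⁻¹ * (q.out * h))⁻¹ := by group
    rw [h2]
    exact inv_mem this
  · rintro ⟨x, hx⟩
    apply Subtype.ext
    simp [mul_inv_cancel_left]
  · rintro ⟨⟨q, hq⟩, ⟨h, hh⟩⟩
    have hmk : QuotientGroup.mk (q.out * h) = q := by
      rw [← hmkout q, QuotientGroup.eq]
      simpa [mul_assoc] using hh
    ext
    · exact hmk
    · simp only [hmk]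
      group

/-- The set of `x` conjugating `g` into `H` counts `|H ∩ Cl(g)| * |C(g)|`. -/
lemma card_conj_into' (H : Subgroup G) (g : G) :
    Nat.card {x : G // x⁻¹ * g * x ∈ H} =
      Nat.card {h : G // h ∈ H ∧ IsConj g h} * Nat.card {z : G // z * g = g * z} := by
  rw [← Nat.card_prod]
  apply Nat.card_congr
  classical
  -- for each `h` conjugate to `g`, choose a conjugator `u h` with `u * g * u⁻¹ = h`
  set u : {h : G // h ∈ H ∧ IsConj g h} → G := fun h => (isConj_iff.mp h.2.2).choose with hu
  have hus : ∀ h, (u h) * g * (u h)⁻¹ = h.1 := fun h => (isConj_iff.mp h.2.2).choose_spec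
  set F : {x : G // x⁻¹ * g * x ∈ H} → {h : G // h ∈ H ∧ IsConj g h} :=
    fun x => ⟨x.1⁻¹ * g * x.1, x.2, isConj_iff.mpr ⟨x.1⁻¹, by group⟩⟩ with hF
  have hcomm : ∀ x : {x : G // x⁻¹ * g * x ∈ H}, ((x : G) * u (F x)) * g = g * ((x : G) * u (F x)) := by
    intro x
    have h1 := hus (F x)
    have hFx : ((F x) : G) = (x : G)⁻¹ * g * (x : G) := rfl
    rw [hFx] at h1
    rw [mul_assoc, show u (F x) * g = (x : G)⁻¹ * g * (x : G) * (u (F x)) from by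
      rw [← h1]; group]
    group
  apply Equiv.ofBijective (f := fun x => (F x, ⟨(x : G) * u (F x), hcomm x⟩))
  constructor
  · intro x y hxy
    have h1 : F x = F y := congrArg Prod.fst hxy
    have h2 : (x : G) * u (F x) = (y : G) * u (F y) := congrArg (fun p => (p.2 : G)) hxy
    rw [h1] at h2
    apply Subtype.ext
    exact mul_right_cancel h2
  · rintro ⟨h, ⟨z, hz⟩⟩
    have h1 := hus h
    have hzg : z⁻¹ * g * z = g := by rw [mul_assoc, ← hz]; group
    have hfst : (z * (u h)⁻¹)⁻¹ * g * (z * (u h)⁻¹) = (h : G) := by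
      have key : (z * (u h)⁻¹)⁻¹ * g * (z * (u h)⁻¹) = (u h) * (z⁻¹ * g * z) * (u h)⁻¹ := by
        group
      rw [key, hzg, h1]
    refine ⟨⟨z * (u h)⁻¹, by rw [hfst]; exact h.2.1⟩, ?_⟩
    have h2 : F ⟨z * (u h)⁻¹, by rw [hfst]; exact h.2.1⟩ = h := Subtype.ext hfst
    refine Prod.ext h2 (Subtype.ext ?_)
    show (z * (u h)⁻¹) * u (F ⟨z * (u h)⁻¹, _⟩) = z
    rw [h2]
    group

lemma card_fixed_one (H : Subgroup G) :
    Nat.card {q : G ⧸ H // (1 : G) • q = q} = Nat.card (G ⧸ H) :=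
  Nat.card_congr (Equiv.subtypeUnivEquiv (fun q => one_smul _ q))

/-- From equality of fixed-point counts we get equality of cardinalities. -/
lemma card_eq_of_fixcard_eq {H1 H2 : Subgroup G}
    (hfix : ∀ g : G, Nat.card {q : G ⧸ H1 // g • q = q} = Nat.card {q : G ⧸ H2 // g • q = q}) :
    Nat.card H1 = Nat.card H2 := by
  have h1 := Subgroup.card_eq_card_quotient_mul_card_subgroup H1
  have h2 := Subgroup.card_eq_card_quotient_mul_card_subgroup H2
  have hq : Nat.card (G ⧸ H1) = Nat.card (G ⧸ H2) := by
    rw [← card_fixed_one H1, ← card_fixed_one H2]; exact hfix 1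
  have hqpos : 0 < Nat.card (G ⧸ H2) := Nat.card_pos
  rw [hq] at h1
  exact Nat.eq_of_mul_eq_mul_left hqpos (h1.symm.trans h2)

lemma conj_transfer {H1 H2 : Subgroup G}
    (hfix : ∀ g : G, Nat.card {q : G ⧸ H1 // g • q = q} = Nat.card {q : G ⧸ H2 // g • q = q}) :
    ∀ x ∈ H1, ∃ y ∈ H2, IsConj x y := by
  intro x hx
  have hcard := card_eq_of_fixcard_eq hfix
  have key : Nat.card {h : G // h ∈ H1 ∧ IsConj x h} = Nat.card {h : G // h ∈ H2 ∧ IsConj x h} := by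
    have e1 := card_conj_into H1 x
    have e2 := card_conj_into H2 x
    have e1' := card_conj_into' H1 x
    have e2' := card_conj_into' H2 x
    have hc : Nat.card {h : G // h ∈ H1 ∧ IsConj x h} * Nat.card {z : G // z * x = x * z} =
        Nat.card {h : G // h ∈ H2 ∧ IsConj x h} * Nat.card {z : G // z * x = x * z} := by
      rw [← e1', ← e2', e1, e2, hfix x, hcard]
    have hcent : 0 < Nat.card {z : G // z * x = x * z} := by
      haveI : Nonempty {z : G // z * x = x * z} := ⟨⟨1, by simp⟩⟩
      exact Nat.card_pos
    exact Nat.eq_of_mul_eq_mul_right hcent hc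
  have hpos : 0 < Nat.card {h : G // h ∈ H1 ∧ IsConj x h} := by
    haveI : Nonempty {h : G // h ∈ H1 ∧ IsConj x h} := ⟨⟨x, hx, IsConj.refl x⟩⟩
    exact Nat.card_pos
  rw [key] at hpos
  obtain ⟨⟨y, hy, hconj⟩⟩ := (Nat.card_pos_iff.mp hpos).1
  exact ⟨y, hy, hconj⟩

end Counting

/-! ### From module isomorphism to equality of fixed-point counts -/

section RepTheory

open Representation

lemma trace_ofMulAction {G : Type*} [Group G] (Z : Type*) [Fintype Z] [DecidableEq Z]
    [MulAction G Z] (g : G) :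
    LinearMap.trace ℂ (MonoidAlgebra ℂ Z) (Representation.ofMulAction ℂ G Z g) =
      Fintype.card {z : Z // g • z = z} := by
  rw [LinearMap.trace_eq_matrix_trace ℂ (MonoidAlgebra.basis Z ℂ), Matrix.trace]
  have hdiag : ∀ z : Z,
      Matrix.diag (LinearMap.toMatrix (MonoidAlgebra.basis Z ℂ) (MonoidAlgebra.basis Z ℂ)
        (Representation.ofMulAction ℂ G Z g)) z = if g • z = z then (1 : ℂ) else 0 := by
    intro z
    simp [Matrix.diag, LinearMap.toMatrix_apply, Representation.ofMulAction_single,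
      MonoidAlgebra.basis, MonoidAlgebra.coeff_single, Finsupp.single_apply]
  rw [Finset.sum_congr rfl (fun z _ => hdiag z), Finset.sum_boole, Fintype.card_subtype]

lemma fixcard_eq_of_iso {G : Type*} [Group G] {X Y : Type*} [Fintype X] [Fintype Y]
    [DecidableEq X] [DecidableEq Y] [MulAction G X] [MulAction G Y]
    (e : (Representation.ofMulAction ℂ G X).asModule ≃ₗ[MonoidAlgebra ℂ G]
      (Representation.ofMulAction ℂ G Y).asModule) (g : G) :
    Fintype.card {x : X // g • x = x} = Fintype.card {y : Y // g • y = y} := by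
  set ρX := Representation.ofMulAction ℂ G X with hρX
  set ρY := Representation.ofMulAction ℂ G Y with hρY
  set φ0 : (MonoidAlgebra ℂ X) ≃+ (MonoidAlgebra ℂ Y) :=
    (ρX.asModuleEquiv.symm.toAddEquiv.trans e.toAddEquiv).trans ρY.asModuleEquiv.toAddEquiv with hφ0
  have hA2 : ∀ (r : ℂ) (w : ρY.asModule),
      ρY.asModuleEquiv ((algebraMap ℂ (MonoidAlgebra ℂ G) r) • w) = r • ρY.asModuleEquiv w := by
    intro r w
    have h := ρY.asModuleEquiv_symm_map_smul r (ρY.asModuleEquiv w)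
    rw [LinearEquiv.symm_apply_apply] at h
    rw [← h, LinearEquiv.apply_symm_apply]
  have hA2ρ : ∀ (w : ρY.asModule),
      ρY.asModuleEquiv ((MonoidAlgebra.of ℂ G g) • w) = ρY g (ρY.asModuleEquiv w) := by
    intro w
    have h := ρY.asModuleEquiv_symm_map_rho g (ρY.asModuleEquiv w)
    rw [LinearEquiv.symm_apply_apply] at h
    rw [← h, LinearEquiv.apply_symm_apply]
  have hsmul : ∀ (r : ℂ) (v : MonoidAlgebra ℂ X), φ0 (r • v) = r • φ0 v := by
    intro r v
    show ρY.asModuleEquiv (e (ρX.asModuleEquiv.symm (r • v))) = _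
    rw [ρX.asModuleEquiv_symm_map_smul, map_smul, hA2]
    rfl
  set φ : (MonoidAlgebra ℂ X) ≃ₗ[ℂ] (MonoidAlgebra ℂ Y) := { φ0 with map_smul' := hsmul } with hφ
  have hcomm : ∀ v : MonoidAlgebra ℂ X, φ (ρX g v) = ρY g (φ v) := by
    intro v
    show ρY.asModuleEquiv (e (ρX.asModuleEquiv.symm (ρX g v))) = _
    rw [ρX.asModuleEquiv_symm_map_rho, map_smul, hA2ρ]
    rfl
  have hconj : ρY g = φ.conj (ρX g) := LinearMap.ext fun v => by
    rw [LinearEquiv.conj_apply_apply, hcomm, LinearEquiv.apply_symm_apply]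
  have htr : LinearMap.trace ℂ (MonoidAlgebra ℂ X) (ρX g) = LinearMap.trace ℂ (MonoidAlgebra ℂ Y) (ρY g) := by
    rw [hconj, LinearMap.trace_conj']
  rw [hρX, hρY, trace_ofMulAction X g, trace_ofMulAction Y g] at htr
  exact_mod_cast htr

end RepTheory


/-! ### The symmetric group on four letters -/

section S4

abbrev G4 := Equiv.Perm (Fin 4)

def τ0 : G4 := Equiv.swap 0 1
def c3 : G4 := Equiv.swap 0 1 * Equiv.swap 1 2
def Vfin : Finset G4 :=
  {1, Equiv.swap 0 1 * Equiv.swap 2 3, Equiv.swap 0 2 * Equiv.swap 1 3,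
    Equiv.swap 0 3 * Equiv.swap 1 2}
def Cfin : Finset G4 := {1, Equiv.swap 0 1, Equiv.swap 2 3, Equiv.swap 0 1 * Equiv.swap 2 3}
def E6fin : Finset G4 := {1, Equiv.swap 0 1, Equiv.swap 0 2, Equiv.swap 1 2, c3, c3⁻¹}
def Efin : Finset G4 := Finset.univ.filter (fun z : G4 => Equiv.Perm.sign z = 1)

lemma natCard_G4 : Nat.card G4 = 24 := by
  rw [Nat.card_eq_fintype_card, Fintype.card_perm, Fintype.card_fin]
  rfl

/-! #### decidable facts -/

lemma dC : ∀ z : G4, z * τ0 = τ0 * z → z ∈ Cfin := by decide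
lemma dV : ∀ x : G4, x ^ 2 = 1 → (¬∃ c : G4, c * τ0 * c⁻¹ = x) → x ∈ Vfin := by decide
lemma d3a : ∀ x : G4, x ^ 3 = 1 → x ≠ 1 → ∃ c : G4, c * x * c⁻¹ = c3 := by decide
lemma d7 : ∀ y : G4, y ^ 3 = 1 → y ≠ 1 → y ≠ c3 → y ≠ c3⁻¹ →
    ({1, c3, c3⁻¹, y, y⁻¹, c3 * y, c3 * y⁻¹} : Finset G4).card = 7 := by decide
lemma dE6 : ∀ h : G4, (h * c3 * h⁻¹ = c3 ∨ h * c3 * h⁻¹ = c3⁻¹) → h ∈ E6fin := by decide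
lemma dE : ∀ z ∈ Efin, ∃ a b : G4, a ^ 2 * b ^ 2 = z := by decide
lemma c3_cube : c3 ^ 3 = 1 := by decide
lemma c3_ne_one : c3 ≠ 1 := by decide
lemma τ0_mem_Cfin : τ0 ∈ Cfin := by decide
lemma c3_mem_E6fin : c3 ∈ E6fin := by decide
lemma Vfin_card : Vfin.card = 4 := by decide
lemma Cfin_card : Cfin.card = 4 := by decide
lemma E6fin_card : E6fin.card = 6 := by decide
lemma Efin_card : Efin.card = 12 := by decide

/-! #### generic subgroup helpers -/

section Helpers

variable {G : Type*} [Group G]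

lemma mem_conjMap {g x : G} {H : Subgroup G} :
    x ∈ Subgroup.map (MulAut.conj g).toMonoidHom H ↔ g⁻¹ * x * g ∈ H := by
  rw [Subgroup.mem_map_equiv, MulAut.conj_symm_apply]

lemma card_conjMap (g : G) (H : Subgroup G) :
    Nat.card (Subgroup.map (MulAut.conj g).toMonoidHom H) = Nat.card H :=
  (Nat.card_congr (H.equivMapOfInjective (MulAut.conj g).toMonoidHom
    (MulAut.conj g).injective).toEquiv).symm

lemma conjMap_conjMap (a b : G) (H : Subgroup G) :
    Subgroup.map (MulAut.conj a).toMonoidHom (Subgroup.map (MulAut.conj b).toMonoidHom H) =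
      Subgroup.map (MulAut.conj (a * b)).toMonoidHom H := by
  rw [Subgroup.map_map]
  congr 1
  ext x
  simp [MulAut.conj_apply, mul_assoc]

lemma conjMap_one (H : Subgroup G) :
    Subgroup.map (MulAut.conj (1 : G)).toMonoidHom H = H := by
  ext x
  rw [mem_conjMap]
  simp

lemma exists_conj_of_conj_eq {g1 g2 : G} {H1 H2 : Subgroup G}
    (h : Subgroup.map (MulAut.conj g1).toMonoidHom H1 =
      Subgroup.map (MulAut.conj g2).toMonoidHom H2) :
    ∃ g : G, Subgroup.map (MulAut.conj g).toMonoidHom H1 = H2 := by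
  refine ⟨g2⁻¹ * g1, ?_⟩
  rw [← conjMap_conjMap, h, conjMap_conjMap, inv_mul_cancel, conjMap_one]

lemma pow_natCard_of_mem [Finite G] {H : Subgroup G} {x : G} (hx : x ∈ H) :
    x ^ Nat.card H = 1 := by
  have h := pow_card_eq_one' (G := H) (x := ⟨x, hx⟩)
  have h2 := congrArg (Subtype.val) h
  rw [SubmonoidClass.coe_pow, OneMemClass.coe_one] at h2
  exact h2

lemma comm_of_sq_one {a b : G} (ha : a ^ 2 = 1) (hb : b ^ 2 = 1) (hab : (a * b) ^ 2 = 1) :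
    a * b = b * a := by
  have h1 : a * b * (a * b) = 1 := by rw [← pow_two]; exact hab
  have h2 : a * a = 1 := by rw [← pow_two]; exact ha
  have h3 : b * b = 1 := by rw [← pow_two]; exact hb
  have ha' : a⁻¹ = a := by rw [← mul_one a⁻¹, ← h2]; group
  have hb' : b⁻¹ = b := by rw [← mul_one b⁻¹, ← h3]; group
  have : a * b = (a * b)⁻¹ := by
    rw [eq_comm, inv_eq_iff_mul_eq_one]
    exact h1
  rw [this, mul_inv_rev, ha', hb']

lemma conj_pow_eq (a b : G) (n : ℕ) : (a * b * a⁻¹) ^ n = a * b ^ n * a⁻¹ := by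
  induction n with
  | zero => simp
  | succ n ih =>
    rw [pow_succ, pow_succ, ih]
    group

/-- conjugation in a prime-order subgroup -/
lemma prime_card_eq_zpowers {p : ℕ} (hp : p.Prime) [Finite G] {H : Subgroup G} {x : G}
    (hcard : Nat.card H = p) (hx : x ∈ H) (hx1 : x ≠ 1) : H = Subgroup.zpowers x := by
  have hord : orderOf x ∣ p := by
    rw [← hcard]
    exact orderOf_dvd_of_pow_eq_one (pow_natCard_of_mem hx)
  rcases (Nat.Prime.eq_one_or_self_of_dvd hp _ hord) with h | h
  · exact absurd (orderOf_eq_one_iff.mp h) hx1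
  · refine (Subgroup.eq_of_le_of_card_ge (Subgroup.zpowers_le.mpr hx) ?_).symm
    rw [Nat.card_zpowers, h, hcard]

end Helpers

/-! #### S4-specific helpers -/

lemma ncard_coe_subgroup (K : Subgroup G4) : (K : Set G4).ncard = Nat.card K := by
  rw [← Nat.card_coe_set_eq]
  rfl

lemma coe_eq_finset_of_le {K : Subgroup G4} {s : Finset G4} (h : ∀ x, x ∈ K → x ∈ s)
    (hc : s.card ≤ Nat.card K) : (K : Set G4) = ↑s := by
  apply Set.eq_of_subset_of_ncard_le
  · intro x hx
    exact h x hx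
  · rw [Set.ncard_coe_finset, ncard_coe_subgroup]
    exact hc
  · exact Set.toFinite _

lemma coe_eq_finset_of_ge {K : Subgroup G4} {s : Finset G4} (h : ∀ x ∈ s, x ∈ K)
    (hc : Nat.card K ≤ s.card) : (K : Set G4) = ↑s := by
  refine (Set.eq_of_subset_of_ncard_le (fun x hx => h x (by simpa using hx)) ?_
    (Set.toFinite _)).symm
  rw [Set.ncard_coe_finset, ncard_coe_subgroup]
  exact hc

lemma eq_of_coe_eq {K1 K2 : Subgroup G4} {s : Finset G4} (h1 : (K1 : Set G4) = ↑s)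
    (h2 : (K2 : Set G4) = ↑s) : K1 = K2 :=
  SetLike.coe_injective (h1.trans h2.symm)

lemma finset_card_le_of_subset {K : Subgroup G4} {s : Finset G4} (h : ∀ x ∈ s, x ∈ K) :
    s.card ≤ Nat.card K := by
  rw [← Set.ncard_coe_finset, ← ncard_coe_subgroup]
  exact Set.ncard_le_ncard (fun x hx => h x (by simpa using hx)) (Set.toFinite _)

/-! #### the case analysis -/

lemma case_prime {p : ℕ} (hp : p.Prime) {H1 H2 : Subgroup G4}
    (h1 : Nat.card H1 = p) (h2 : Nat.card H2 = p)
    (ht : ∀ x ∈ H1, ∃ y ∈ H2, IsConj x y) :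
    ∃ g : G4, Subgroup.map (MulAut.conj g).toMonoidHom H1 = H2 := by
  have hne : H1 ≠ ⊥ := by
    intro hbot
    rw [hbot, Subgroup.card_eq_one.mpr rfl] at h1
    exact hp.one_lt.ne h1
  have hex : ∃ x ∈ H1, x ≠ (1 : G4) := by
    by_contra hno
    push_neg at hno
    exact hne ((Subgroup.eq_bot_iff_forall H1).mpr hno)
  obtain ⟨x, hx, hx1⟩ := hex
  obtain ⟨y, hy, hxy⟩ := ht x hx
  have hy1 : y ≠ 1 := by
    intro hy1
    rw [hy1] at hxy
    exact hx1 (isConj_one_left.mp hxy)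
  have e1 : H1 = Subgroup.zpowers x := prime_card_eq_zpowers hp h1 hx hx1
  have e2 : H2 = Subgroup.zpowers y := prime_card_eq_zpowers hp h2 hy hy1
  obtain ⟨c, hc⟩ := isConj_iff.mp hxy
  refine ⟨c, ?_⟩
  have hcy : (MulAut.conj c).toMonoidHom x = y := by simpa using hc
  rw [e1, e2, MonoidHom.map_zpowers, hcy]

lemma case_four {H1 H2 : Subgroup G4}
    (h1 : Nat.card H1 = 4) (h2 : Nat.card H2 = 4)
    (ht : ∀ x ∈ H1, ∃ y ∈ H2, IsConj x y) (ht' : ∀ y ∈ H2, ∃ x ∈ H1, IsConj x y) :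
    ∃ g : G4, Subgroup.map (MulAut.conj g).toMonoidHom H1 = H2 := by
  have hord4 : ∀ z : G4, z ^ 4 = 1 → z ^ 2 ≠ 1 → orderOf z = 4 := by
    intro z hz4 hz2
    rw [orderOf_eq_iff (by norm_num)]
    refine ⟨hz4, ?_⟩
    intro m hm hm0 hzm
    interval_cases m
    · rw [pow_one] at hzm
      rw [hzm] at hz2
      exact hz2 (one_pow 2)
    · exact hz2 hzm
    · apply hz2
      have hz : z = 1 := by
        have h34 : z ^ 4 = z ^ 3 * z := pow_succ z 3
        rw [hz4, hzm, one_mul] at h34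
        exact h34.symm
      rw [hz, one_pow]
  by_cases h4 : ∃ x ∈ H1, x ^ 2 ≠ 1
  · -- cyclic case
    obtain ⟨x, hx, hx2⟩ := h4
    obtain ⟨y, hy, hxy⟩ := ht x hx
    obtain ⟨c, hc⟩ := isConj_iff.mp hxy
    have hy2 : y ^ 2 ≠ 1 := by
      intro hy2
      apply hx2
      have hxc : x = c⁻¹ * y * c := by rw [← hc]; group
      have hcp := conj_pow_eq c⁻¹ y 2
      rw [inv_inv] at hcp
      rw [hxc, hcp, hy2]
      group
    have hx4 : x ^ 4 = 1 := by
      have := pow_natCard_of_mem hx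
      rwa [h1] at this
    have hy4 : y ^ 4 = 1 := by
      have := pow_natCard_of_mem hy
      rwa [h2] at this
    have e1 : H1 = Subgroup.zpowers x := by
      refine (Subgroup.eq_of_le_of_card_ge (Subgroup.zpowers_le.mpr hx) ?_).symm
      rw [Nat.card_zpowers, hord4 x hx4 hx2, h1]
    have e2 : H2 = Subgroup.zpowers y := by
      refine (Subgroup.eq_of_le_of_card_ge (Subgroup.zpowers_le.mpr hy) ?_).symm
      rw [Nat.card_zpowers, hord4 y hy4 hy2, h2]
    have hcy : (MulAut.conj c).toMonoidHom x = y := by simpa using hc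
    exact ⟨c, by rw [e1, e2, MonoidHom.map_zpowers, hcy]⟩
  · push_neg at h4
    have hsq1 : ∀ x ∈ H1, x ^ 2 = 1 := fun x hx => h4 x hx
    have hsq2 : ∀ y ∈ H2, y ^ 2 = 1 := by
      intro y hy
      by_contra hy2
      obtain ⟨x, hx, hxy⟩ := ht' y hy
      obtain ⟨c, hc⟩ := isConj_iff.mp hxy
      apply hy2
      have hx2 := hsq1 x hx
      rw [← hc, conj_pow_eq, hx2]
      group
    by_cases hτ : ∃ x ∈ H1, IsConj τ0 x
    · -- non-normal Klein four group, contains a transposition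
      obtain ⟨x, hx, hτx⟩ := hτ
      obtain ⟨y, hy, hxy⟩ := ht x hx
      have hτy : IsConj τ0 y := hτx.trans hxy
      obtain ⟨c, hc⟩ := isConj_iff.mp hτx
      obtain ⟨d, hd⟩ := isConj_iff.mp hτy
      have key : ∀ (H : Subgroup G4) (e : G4), Nat.card H = 4 → (∀ z ∈ H, z ^ 2 = 1) →
          e * τ0 * e⁻¹ ∈ H →
          ((Subgroup.map (MulAut.conj e⁻¹).toMonoidHom H : Subgroup G4) : Set G4) = ↑Cfin := by
        intro H e hH hsq he
        set K := Subgroup.map (MulAut.conj e⁻¹).toMonoidHom H with hK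
        have hτK : τ0 ∈ K := by
          rw [hK, mem_conjMap, inv_inv]
          exact he
        have hcardK : Nat.card K = 4 := by rw [hK, card_conjMap, hH]
        have hsqK : ∀ z ∈ K, z ^ 2 = 1 := by
          intro z hz
          rw [hK, mem_conjMap, inv_inv] at hz
          have h2 := hsq _ hz
          rw [conj_pow_eq] at h2
          calc z ^ 2 = e⁻¹ * (e * z ^ 2 * e⁻¹) * e := by group
          _ = 1 := by rw [h2]; group
        have hcomm : ∀ z ∈ K, z * τ0 = τ0 * z := fun z hz =>
          comm_of_sq_one (hsqK z hz) (hsqK τ0 hτK) (hsqK _ (mul_mem hz hτK))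
        exact coe_eq_finset_of_le (fun z hz => dC z (hcomm z hz))
          (by rw [hcardK, Cfin_card])
      have k1 := key H1 c h1 hsq1 (by rw [hc]; exact hx)
      have k2 := key H2 d h2 hsq2 (by rw [hd]; exact hy)
      exact exists_conj_of_conj_eq (eq_of_coe_eq k1 k2)
    · -- normal Klein four group
      have hτ' : ¬∃ y ∈ H2, IsConj τ0 y := by
        rintro ⟨y, hy, hτy⟩
        obtain ⟨x, hx, hxy⟩ := ht' y hy
        exact hτ ⟨x, hx, hτy.trans hxy.symm⟩
      have key : ∀ (H : Subgroup G4), Nat.card H = 4 → (∀ z ∈ H, z ^ 2 = 1) →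
          (¬∃ x ∈ H, IsConj τ0 x) → ((H : Subgroup G4) : Set G4) = ↑Vfin := by
        intro H hH hsq hno
        refine coe_eq_finset_of_le (fun z hz => ?_) (by rw [hH, Vfin_card])
        refine dV z (hsq z hz) ?_
        rintro ⟨c, hc⟩
        exact hno ⟨z, hz, isConj_iff.mpr ⟨c, hc⟩⟩
      refine ⟨1, ?_⟩
      rw [conjMap_one]
      exact eq_of_coe_eq (key H1 h1 hsq1 hτ) (key H2 h2 hsq2 hτ')

lemma case_six {H1 H2 : Subgroup G4}
    (h1 : Nat.card H1 = 6) (h2 : Nat.card H2 = 6) :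
    ∃ g : G4, Subgroup.map (MulAut.conj g).toMonoidHom H1 = H2 := by
  have key : ∀ H : Subgroup G4, Nat.card H = 6 →
      ∃ g : G4, ((Subgroup.map (MulAut.conj g).toMonoidHom H : Subgroup G4) : Set G4) = ↑E6fin := by
    intro H hH
    classical
    haveI : Fintype ↥H := Fintype.ofFinite _
    haveI : Fact (Nat.Prime 3) := ⟨by norm_num⟩
    have hcard' : Fintype.card ↥H = 6 := by rw [← Nat.card_eq_fintype_card, hH]
    obtain ⟨a, ha⟩ := exists_prime_orderOf_dvd_card 3 (by rw [hcard']; norm_num)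
    set x : G4 := (a : G4) with hxa
    have hx3 : x ^ 3 = 1 := by
      have h := pow_orderOf_eq_one a
      rw [ha] at h
      have h2 := congrArg (Subtype.val) h
      rw [SubmonoidClass.coe_pow, OneMemClass.coe_one] at h2
      exact h2
    have hx1 : x ≠ 1 := by
      intro hx1
      have : a = 1 := OneMemClass.coe_eq_one.mp hx1
      rw [this, orderOf_one] at ha
      norm_num at ha
    obtain ⟨c, hc⟩ := d3a x hx3 hx1
    refine ⟨c, ?_⟩
    set K := Subgroup.map (MulAut.conj c).toMonoidHom H with hK
    have hc3K : c3 ∈ K := by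
      rw [hK, mem_conjMap]
      have : c⁻¹ * c3 * c = x := by rw [← hc]; group
      rw [this]
      exact a.2
    have hcardK : Nat.card K = 6 := by rw [hK, card_conjMap, hH]
    refine coe_eq_finset_of_le (fun h hh => ?_) (by rw [hcardK, E6fin_card])
    set w := h * c3 * h⁻¹ with hw
    have hwK : w ∈ K := mul_mem (mul_mem hh hc3K) (inv_mem hh)
    have hw3 : w ^ 3 = 1 := by
      rw [hw, conj_pow_eq, c3_cube]
      group
    have hw1 : w ≠ 1 := by
      intro hw1
      apply c3_ne_one
      have hcc : c3 = h⁻¹ * (h * c3 * h⁻¹) * h := by group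
      rw [← hw, hw1] at hcc
      rw [hcc]
      group
    have hwmem : w = c3 ∨ w = c3⁻¹ := by
      by_contra hcon
      push_neg at hcon
      have hs := d7 w hw3 hw1 hcon.1 hcon.2
      have hsub : ∀ z ∈ ({1, c3, c3⁻¹, w, w⁻¹, c3 * w, c3 * w⁻¹} : Finset G4), z ∈ K := by
        intro z hz
        simp only [Finset.mem_insert, Finset.mem_singleton] at hz
        rcases hz with rfl | rfl | rfl | rfl | rfl | rfl | rfl
        exacts [one_mem K, hc3K, inv_mem hc3K, hwK, inv_mem hwK, mul_mem hc3K hwK,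
          mul_mem hc3K (inv_mem hwK)]
      have hle := finset_card_le_of_subset hsub
      rw [hs, hcardK] at hle
      omega
    exact dE6 h hwmem
  obtain ⟨g1, k1⟩ := key H1 h1
  obtain ⟨g2, k2⟩ := key H2 h2
  exact exists_conj_of_conj_eq (eq_of_coe_eq k1 k2)

open scoped Pointwise in
lemma case_eight {H1 H2 : Subgroup G4}
    (h1 : Nat.card H1 = 8) (h2 : Nat.card H2 = 8) :
    ∃ g : G4, Subgroup.map (MulAut.conj g).toMonoidHom H1 = H2 := by
  haveI : Fact (Nat.Prime 2) := ⟨Nat.prime_two⟩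
  haveI : Finite (Subgroup G4) :=
    Finite.of_injective (fun K : Subgroup G4 => (K : Set G4)) SetLike.coe_injective
  haveI : Finite (Sylow 2 G4) :=
    Finite.of_injective (fun P : Sylow 2 G4 => P.toSubgroup) (fun P Q h => Sylow.ext h)
  have key : ∀ H : Subgroup G4, Nat.card H = 8 → ∃ P : Sylow 2 G4, H = P.toSubgroup := by
    intro H hH
    have hp : IsPGroup 2 H := IsPGroup.of_card (n := 3) (by rw [hH]; norm_num)
    obtain ⟨P, hP⟩ := hp.exists_le_sylow
    obtain ⟨n, hn⟩ := IsPGroup.iff_card.mp P.isPGroup'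
    have hdvd : (2 : ℕ) ^ n ∣ 24 := by
      rw [← hn, ← natCard_G4]
      exact Subgroup.card_subgroup_dvd_card P.toSubgroup
    have hn3 : n ≤ 3 := by
      by_contra hlt
      push_neg at hlt
      have h16 : (16 : ℕ) ∣ 24 := by
        calc (16 : ℕ) = 2 ^ 4 := by norm_num
        _ ∣ 2 ^ n := pow_dvd_pow 2 hlt
        _ ∣ 24 := hdvd
      norm_num at h16
    refine ⟨P, Subgroup.eq_of_le_of_card_ge hP ?_⟩
    rw [hH, hn]
    calc (2 : ℕ) ^ n ≤ 2 ^ 3 := Nat.pow_le_pow_right (by norm_num) hn3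
    _ = 8 := by norm_num
  obtain ⟨P, hP⟩ := key H1 h1
  obtain ⟨Q, hQ⟩ := key H2 h2
  obtain ⟨g, hg⟩ := MulAction.exists_smul_eq G4 P Q
  refine ⟨g, ?_⟩
  rw [hP, hQ, ← hg]
  ext z
  rw [mem_conjMap]
  show _ ↔ z ∈ (g • P).toSubgroup
  rw [show (g • P).toSubgroup = MulAut.conj g • P.toSubgroup from rfl,
    Subgroup.mem_pointwise_smul_iff_inv_smul_mem]
  simp [MulAut.smul_def, MulAut.inv_def, MulAut.conj_symm_apply, mul_assoc]

lemma case_twelve {H1 H2 : Subgroup G4}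
    (h1 : Nat.card H1 = 12) (h2 : Nat.card H2 = 12) :
    ∃ g : G4, Subgroup.map (MulAut.conj g).toMonoidHom H1 = H2 := by
  have key : ∀ H : Subgroup G4, Nat.card H = 12 → (H : Set G4) = ↑Efin := by
    intro H hH
    have hidx : H.index = 2 := by
      have := Subgroup.card_mul_index H
      rw [hH, natCard_G4] at this
      omega
    apply coe_eq_finset_of_ge
    · intro z hz
      obtain ⟨a, b, hab⟩ := dE z hz
      rw [← hab]
      exact mul_mem (Subgroup.sq_mem_of_index_two hidx a) (Subgroup.sq_mem_of_index_two hidx b)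
    · rw [hH, Efin_card]
  exact ⟨1, by rw [conjMap_one]; exact eq_of_coe_eq (key H1 h1) (key H2 h2)⟩

lemma conj_of_transfers (H1 H2 : Subgroup G4) (hcard : Nat.card H1 = Nat.card H2)
    (ht : ∀ x ∈ H1, ∃ y ∈ H2, IsConj x y) (ht' : ∀ y ∈ H2, ∃ x ∈ H1, IsConj x y) :
    ∃ g : G4, Subgroup.map (MulAut.conj g).toMonoidHom H1 = H2 := by
  have hdvd : Nat.card H1 ∣ 24 := natCard_G4 ▸ Subgroup.card_subgroup_dvd_card H1
  have hmem : Nat.card H1 ∈ Nat.divisors 24 := Nat.mem_divisors.mpr ⟨hdvd, by norm_num⟩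
  rw [show Nat.divisors 24 = {1, 2, 3, 4, 6, 8, 12, 24} from by decide] at hmem
  simp only [Finset.mem_insert, Finset.mem_singleton] at hmem
  rcases hmem with h | h | h | h | h | h | h | h
  · -- card 1
    have e1 := Subgroup.card_eq_one.mp h
    have e2 := Subgroup.card_eq_one.mp (hcard.symm.trans h)
    exact ⟨1, by rw [conjMap_one, e1, e2]⟩
  · exact case_prime Nat.prime_two h (hcard.symm.trans h) ht
  · exact case_prime Nat.prime_three h (hcard.symm.trans h) ht
  · exact case_four h (hcard.symm.trans h) ht ht'
  · exact case_six h (hcard.symm.trans h)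
  · exact case_eight h (hcard.symm.trans h)
  · exact case_twelve h (hcard.symm.trans h)
  · -- card 24
    refine ⟨1, ?_⟩
    rw [conjMap_one, Subgroup.eq_top_of_le_card H1 (by rw [h, natCard_G4]),
      Subgroup.eq_top_of_le_card H2 (by rw [← hcard, h, natCard_G4])]

end S4

end S4LD

/-- The symmetric group `S_4` has linearly distinguishable subgroups: if `H_1` and
`H_2` are subgroups of `S_4` whose complex permutation representations on the coset
spaces `S_4/H_1` and `S_4/H_2` (the inductions `Ind_{H_i}^{S_4} 1`) are isomorphic as
representations, then `H_1` and `H_2` are conjugate in `S_4`. -/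
theorem S4_linearly_distinguishable_subgroups
    (H1 H2 : Subgroup (Equiv.Perm (Fin 4)))
    (h : Nonempty
      ((Representation.ofMulAction ℂ (Equiv.Perm (Fin 4))
          (Equiv.Perm (Fin 4) ⧸ H1)).asModule
        ≃ₗ[MonoidAlgebra ℂ (Equiv.Perm (Fin 4))]
       (Representation.ofMulAction ℂ (Equiv.Perm (Fin 4))
          (Equiv.Perm (Fin 4) ⧸ H2)).asModule)) :
    ∃ g : Equiv.Perm (Fin 4), Subgroup.map (MulAut.conj g).toMonoidHom H1 = H2 := by
  obtain ⟨e⟩ := h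
  classical
  haveI f1 : Fintype (Equiv.Perm (Fin 4) ⧸ H1) := Fintype.ofFinite _
  haveI f2 : Fintype (Equiv.Perm (Fin 4) ⧸ H2) := Fintype.ofFinite _
  have hfix : ∀ g : Equiv.Perm (Fin 4),
      Nat.card {q : Equiv.Perm (Fin 4) ⧸ H1 // g • q = q} =
        Nat.card {q : Equiv.Perm (Fin 4) ⧸ H2 // g • q = q} := by
    intro g
    rw [Nat.card_eq_fintype_card, Nat.card_eq_fintype_card]
    exact S4LD.fixcard_eq_of_iso e g
  refine S4LD.conj_of_transfers H1 H2 (S4LD.card_eq_of_fixcard_eq hfix)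
    (S4LD.conj_transfer hfix) (fun y hy => ?_)
  obtain ⟨x, hx, hc⟩ := S4LD.conj_transfer (fun g => (hfix g).symm) y hy
  exact ⟨x, hx, hc.symm⟩
end
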